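/- Let $\Field$ be a field with at least $3$ elements and $R$ a commutative ring. Then for every pair of distinct lines $L, L' \in \mathbb{P}^1(\Field)$, the element $[L] - [L']$ of $\widetilde{H}_0(\mathbb{P}^1(\Field);R)$ lies in the submodule generated by elements of the form $g\cdot x - x$ with $g \in \SL_2(\Field)$ and $x \in \widetilde{H}_0(\mathbb{P}^1(\Field);R)$. -/

import Mathlib

/-!
`SL₂(F)` acts 2-transitively on `ℙ¹(F)`, so for distinct lines `x ≠ y` the classes of
`[x] - [y]` modulo the span of the `g • z - z` are all equal, to `c` say. With a third
line `w`, `[x] - [y] = ([x] - [w]) + ([w] - [y])` gives `c = 2c`, so `c = 0`.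
-/

open Projectivization MulAction Finsupp
open scoped LinearAlgebra.Projectivization

/-- The action of `g ∈ SL₂(F)` on the projective line `ℙ¹(F)` (the set of lines in `F²`). -/
noncomputable def pact {F : Type*} [Field F] (g : Matrix.SpecialLinearGroup (Fin 2) F) :
    ℙ F (Fin 2 → F) → ℙ F (Fin 2 → F) :=
  Projectivization.map ((Matrix.SpecialLinearGroup.toLin' g).toLinearMap : (Fin 2 → F) →ₗ[F] (Fin 2 → F))
    (Matrix.SpecialLinearGroup.toLin' g).injective

/-- The augmentation map `R[ℙ¹(F)] → R`, whose kernel is the Steinberg module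
`St_{GL₂}(F;R) = H̃₀(ℙ¹(F);R)`. -/
noncomputable def aug (F R : Type*) [Field F] [CommRing R] :
    (ℙ F (Fin 2 → F) →₀ R) →ₗ[R] R :=
  Finsupp.linearCombination R (fun _ => (1 : R))

section ReducedCoinvariants

variable (G X R : Type*) [Group G] [MulAction G X] [CommRing R]

/-- The quotient of `H̃₀(X; R)`, the kernel of the augmentation `R[X] → R`, by this submodule
is the module of `G`-coinvariants of `H̃₀(X; R)`. -/
noncomputable def reducedCoinvariantsKer : Submodule R (X →₀ R) :=
  Submodule.span R {y | ∃ (g : G) (z : X →₀ R),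
    z ∈ LinearMap.ker (linearCombination R fun _ => (1 : R)) ∧ y = mapDomain (g • ·) z - z}

variable {G X R}

lemma single_sub_single_sub_mem_reducedCoinvariantsKer {g : G} {a b c d : X}
    (hc : g • a = c) (hd : g • b = d) :
    (single c (1 : R) - single d 1) - (single a 1 - single b 1) ∈
      reducedCoinvariantsKer G X R := by
  refine Submodule.subset_span ⟨g, single a 1 - single b 1, by simp, ?_⟩
  rw [mapDomain_sub, mapDomain_single, mapDomain_single, hc, hd]

theorem single_sub_single_mem_reducedCoinvariantsKer [IsMultiplyPretransitive G X 2]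
    (hX : 3 ≤ Cardinal.mk X) {a b : X} (hab : a ≠ b) :
    single a (1 : R) - single b 1 ∈ reducedCoinvariantsKer G X R := by
  have congr_of_ne {c d : X} (hcd : c ≠ d) :
      (single c (1 : R) - single d 1) - (single a 1 - single b 1) ∈
        reducedCoinvariantsKer G X R := by
    obtain ⟨g, hc, hd⟩ := is_two_pretransitive_iff.mp ‹_› hab hcd
    exact single_sub_single_sub_mem_reducedCoinvariantsKer hc hd
  obtain ⟨w, hwa, hwb⟩ := Cardinal.exists_ne_ne_of_three_le hX a b
  have hneg := Submodule.add_mem _ (congr_of_ne hwa.symm) (congr_of_ne hwb)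
  rw [← neg_mem_iff]
  convert hneg using 1
  abel

end ReducedCoinvariants

lemma mk_le_mk_projectivization_fin_two (F : Type*) [Field F] :
    Cardinal.mk F ≤ Cardinal.mk (ℙ F (Fin 2 → F)) := by
  refine Cardinal.mk_le_of_injective (f := fun a => mk F ![a, 1] (by simp)) fun a b hab => ?_
  obtain ⟨c, hc⟩ := (mk_eq_mk_iff' ..).mp hab
  have hc1 : c = 1 := by simpa using congrFun hc 1
  simpa [hc1] using (congrFun hc 0).symm

theorem steinberg_gl2_difference_in_augmentation_submodule (F R : Type*) [Field F]
    [CommRing R] (hF : 3 ≤ Cardinal.mk F)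
    (L L' : ℙ F (Fin 2 → F)) (hLL' : L ≠ L') :
    Finsupp.single L (1 : R) - Finsupp.single L' 1 ∈ Submodule.span R
      {y : ℙ F (Fin 2 → F) →₀ R | ∃ (g : Matrix.SpecialLinearGroup (Fin 2) F)
        (z : ℙ F (Fin 2 → F) →₀ R), z ∈ LinearMap.ker (aug F R) ∧
          y = Finsupp.mapDomain (pact g) z - z} :=
  -- `pact g` is definitionally `(g • ·)` for Mathlib's 2-transitive action of `SL₂(F)` on `ℙ¹(F)`.
  single_sub_single_mem_reducedCoinvariantsKer (G := Matrix.SpecialLinearGroup (Fin 2) F)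
    (hF.trans (mk_le_mk_projectivization_fin_two F)) hLL'
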